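/- Let A be a 4×4 real matrix with nonnegative entries, spectral radius r(A) = 1, and a_{11} = 0. Then the spread of A satisfies s(A) ≥ 1/3. -/

import Mathlib

open Matrix Polynomial

/-- The eigenvalues of a real square matrix: the multiset of roots (with multiplicity)
of its characteristic polynomial over `ℂ`. -/
noncomputable def eigs {n : ℕ} (A : Matrix (Fin n) (Fin n) ℝ) : Multiset ℂ :=
  ((A.map Complex.ofReal).charpoly).roots

/-- The spectral radius: the maximum of `|λ|` over the eigenvalues `λ`. -/
noncomputable def specRad {n : ℕ} (A : Matrix (Fin n) (Fin n) ℝ) : ℝ :=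
  sSup {r : ℝ | ∃ μ ∈ eigs A, r = ‖μ‖}

/-- The spread: the maximum of `|λ - μ|` over pairs of eigenvalues `λ, μ`. -/
noncomputable def spread {n : ℕ} (A : Matrix (Fin n) (Fin n) ℝ) : ℝ :=
  sSup {r : ℝ | ∃ μ ∈ eigs A, ∃ ν ∈ eigs A, r = ‖μ - ν‖}
/-!
Let `ρ` be an eigenvalue with `|ρ| = 1` and `s` the spread, so the other three eigenvalues
lie within `s` of `ρ`. Centring at `ρ`, `t = tr A` satisfies `|t - 4ρ| ≤ 3s`, whence
`|t| ≥ 4 - 3s`, and `4 tr(A²) - t² = 4 ∑ λ² - (∑ λ)² = 4 ∑ (λ - ρ)² - (∑ (λ - ρ))²` has real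
part at most `21 s²`. On the other hand `tr(A²) ≥ ∑ aᵢᵢ² ≥ t² / 3` because `A ≥ 0` and `a₁₁ = 0`.
Together, `t² ≤ 63 s²` and `|t| ≥ 4 - 3s`, which is impossible for `s < 1/3`.
-/

namespace Multiset

theorem sum_eq_card_mul_add_sum_map_sub (R : Multiset ℂ) (ρ : ℂ) :
    R.sum = card R * ρ + (R.map (· - ρ)).sum := by
  induction R using Multiset.induction_on with
  | empty => simp
  | cons x R ih => simp only [sum_cons, card_cons, map_cons, ih]; push_cast; ring

theorem sum_map_sq_eq_card_mul_add_sum_map_sub (R : Multiset ℂ) (ρ : ℂ) :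
    (R.map (· ^ 2)).sum =
      card R * ρ ^ 2 + 2 * ρ * (R.map (· - ρ)).sum + (R.map fun x => (x - ρ) ^ 2).sum := by
  induction R using Multiset.induction_on with
  | empty => simp
  | cons x R ih => simp only [sum_cons, card_cons, map_cons, ih]; push_cast; ring

variable {S R : Multiset ℂ} {ρ : ℂ} {s : ℝ}

theorem norm_sum_map_sub_le (hR : ∀ x ∈ R, ‖x - ρ‖ ≤ s) :
    ‖(R.map (· - ρ)).sum‖ ≤ card R * s :=
  calc ‖(R.map (· - ρ)).sum‖ ≤ (R.map (‖· - ρ‖)).sum := by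
        simpa [Function.comp_def] using norm_multiset_sum_le (R.map (· - ρ))
    _ ≤ card R * s := by
        simpa using sum_le_card_nsmul (R.map (‖· - ρ‖)) s (by simpa using hR)

theorem re_sum_map_sub_sq_le (hR : ∀ x ∈ R, ‖x - ρ‖ ≤ s) :
    (R.map fun x => (x - ρ) ^ 2).sum.re ≤ card R * s ^ 2 := by
  have hre : ∀ z ∈ R.map (fun x => ((x - ρ) ^ 2).re), z ≤ s ^ 2 := by
    simp only [mem_map]
    rintro _ ⟨x, hx, rfl⟩
    calc ((x - ρ) ^ 2).re ≤ ‖(x - ρ) ^ 2‖ := Complex.re_le_norm _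
      _ = ‖x - ρ‖ ^ 2 := norm_pow _ _
      _ ≤ s ^ 2 := pow_le_pow_left₀ (norm_nonneg _) (hR x hx) 2
  change Complex.reAddGroupHom _ ≤ _
  rw [map_multiset_sum, map_map]
  simpa using sum_le_card_nsmul _ _ hre

theorem norm_sum_sub_card_mul_le (hρ : ρ ∈ S) (hS : ∀ x ∈ S, ‖x - ρ‖ ≤ s) :
    ‖S.sum - card S * ρ‖ ≤ (card S - 1) * s := by
  obtain ⟨R, rfl⟩ := exists_cons_of_mem hρ
  have hR : ∀ x ∈ R, ‖x - ρ‖ ≤ s := fun x hx => hS x (mem_cons_of_mem hx)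
  have hsum : (ρ ::ₘ R).sum - card (ρ ::ₘ R) * ρ = (R.map (· - ρ)).sum := by
    rw [sum_cons, card_cons, sum_eq_card_mul_add_sum_map_sub R ρ]; push_cast; ring
  rw [hsum, card_cons]
  push_cast
  simpa using norm_sum_map_sub_le hR

theorem re_card_mul_sum_sq_sub_sq_sum_le (hρ : ρ ∈ S) (hS : ∀ x ∈ S, ‖x - ρ‖ ≤ s) :
    (card S * (S.map (· ^ 2)).sum - S.sum ^ 2).re ≤ (card S - 1) * (2 * card S - 1) * s ^ 2 := by
  obtain ⟨R, rfl⟩ := exists_cons_of_mem hρ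
  have hR : ∀ x ∈ R, ‖x - ρ‖ ≤ s := fun x hx => hS x (mem_cons_of_mem hx)
  set D := (R.map (· - ρ)).sum
  set Q := (R.map fun x => (x - ρ) ^ 2).sum
  have hcentre : (card (ρ ::ₘ R) : ℂ) * ((ρ ::ₘ R).map (· ^ 2)).sum - (ρ ::ₘ R).sum ^ 2
      = ((card R + 1 : ℝ) : ℂ) * Q - D ^ 2 := by
    rw [map_cons, sum_cons, sum_cons, card_cons, sum_eq_card_mul_add_sum_map_sub R ρ,
      sum_map_sq_eq_card_mul_add_sum_map_sub R ρ]
    push_cast; ring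
  have hD : -(D ^ 2).re ≤ (card R * s) ^ 2 :=
    calc -(D ^ 2).re ≤ ‖D ^ 2‖ := neg_le.mp (neg_le_of_abs_le (Complex.abs_re_le_norm _))
      _ = ‖D‖ ^ 2 := norm_pow _ _
      _ ≤ (card R * s) ^ 2 := pow_le_pow_left₀ (norm_nonneg _) (norm_sum_map_sub_le hR) 2
  have hQ := mul_le_mul_of_nonneg_left (re_sum_map_sub_sq_le hR)
    (by positivity : (0 : ℝ) ≤ card R + 1)
  rw [hcentre, Complex.sub_re, Complex.re_ofReal_mul, card_cons]
  push_cast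
  nlinarith

end Multiset

namespace Matrix

theorem roots_charpoly_mul_self {K : Type*} [Field K] [IsAlgClosed K]
    {m : Type*} [Fintype m] [DecidableEq m] (M : Matrix m m K) :
    (M * M).charpoly.roots = M.charpoly.roots.map (· ^ 2) := by
  set S := M.charpoly.roots
  have hS : M.charpoly = (S.map fun μ => X - C μ).prod :=
    (IsAlgClosed.splits _).eq_prod_roots_of_monic M.charpoly_monic
  have hcard : Multiset.card S = Fintype.card m := by
    rw [← M.charpoly_natDegree_eq_dim]
    exact splits_iff_card_roots.mp (IsAlgClosed.splits _)
  suffices (M * M).charpoly = ((S.map (· ^ 2)).map fun μ => X - C μ).prod by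
    rw [this, roots_multiset_prod_X_sub_C]
  refine Polynomial.funext fun w => ?_
  obtain ⟨z, rfl⟩ := IsAlgClosed.exists_eq_mul_self w
  have hfactor : scalar m (z * z) - M * M = -((scalar m z - M) * (scalar m (-z) - M)) := by
    have hc : Commute (scalar m z) M := scalar_commute z (fun _ => Commute.all _ _) M
    simp only [map_mul, map_neg, sub_mul, mul_sub, mul_neg, hc.eq]
    abel
  rw [eval_charpoly, hfactor, det_neg, det_mul, ← eval_charpoly, ← eval_charpoly, hS, ← hcard]
  simp only [eval_multiset_prod, Multiset.map_map, Function.comp_def, eval_sub, eval_X, eval_C]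
  rw [← Multiset.prod_map_mul]
  have hsq : ∀ μ, z * z - μ ^ 2 = -((z - μ) * (-z - μ)) := fun μ => by ring
  simp only [hsq]
  rw [← Function.comp_def Neg.neg, ← Multiset.map_map, Multiset.prod_map_neg, Multiset.card_map]

theorem sum_diag_sq_le_trace_mul_self {ι : Type*} [Fintype ι] {A : Matrix ι ι ℝ}
    (hA : ∀ i j, 0 ≤ A i j) : ∑ i, A i i ^ 2 ≤ (A * A).trace := by
  refine Finset.sum_le_sum fun i _ => ?_
  rw [sq, diag_apply, mul_apply]
  exact Finset.single_le_sum (f := fun j => A i j * A j i)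
    (fun j _ => mul_nonneg (hA i j) (hA j i)) (Finset.mem_univ i)

end Matrix

section eigs

variable {n : ℕ} (A : Matrix (Fin n) (Fin n) ℝ)

theorem card_eigs : Multiset.card (eigs A) = n := by
  rw [eigs, splits_iff_card_roots.mp (IsAlgClosed.splits _), charpoly_natDegree_eq_dim,
    Fintype.card_fin]

theorem sum_eigs : (eigs A).sum = (A.trace : ℂ) := by
  rw [eigs, ← trace_eq_sum_roots_charpoly]
  exact (AddMonoidHom.map_trace Complex.ofRealHom A).symm

theorem sum_sq_eigs : ((eigs A).map (· ^ 2)).sum = ((A * A).trace : ℂ) := by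
  have hmul : A.map Complex.ofReal * A.map Complex.ofReal = (A * A).map Complex.ofReal :=
    (Matrix.map_mul (f := Complex.ofRealHom)).symm
  rw [eigs, ← roots_charpoly_mul_self, ← trace_eq_sum_roots_charpoly, hmul]
  exact (AddMonoidHom.map_trace Complex.ofRealHom _).symm

theorem exists_mem_eigs_norm_eq_specRad (hn : 0 < n) : ∃ μ ∈ eigs A, ‖μ‖ = specRad A := by
  have hset : {r : ℝ | ∃ μ ∈ eigs A, r = ‖μ‖} = (‖·‖) '' {μ | μ ∈ eigs A} := by
    ext r; simp [eq_comm]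
  obtain ⟨μ, hμ⟩ := Multiset.card_pos_iff_exists_mem.mp ((card_eigs A).symm ▸ hn)
  rw [specRad, hset]
  exact (Set.Nonempty.image _ ⟨μ, hμ⟩).csSup_mem ((eigs A).finite_toSet.image _)

variable {A}

theorem norm_sub_le_spread {μ ν : ℂ} (hμ : μ ∈ eigs A) (hν : ν ∈ eigs A) :
    ‖μ - ν‖ ≤ spread A := by
  have hset : {r : ℝ | ∃ μ ∈ eigs A, ∃ ν ∈ eigs A, r = ‖μ - ν‖} =
      Set.image2 (‖· - ·‖) {μ | μ ∈ eigs A} {μ | μ ∈ eigs A} := by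
    ext r; simp [Set.mem_image2, eq_comm]
  refine le_csSup ?_ ⟨μ, hμ, ν, hν, rfl⟩
  rw [hset]
  exact ((eigs A).finite_toSet.image2 _ (eigs A).finite_toSet).bddAbove

end eigs

theorem spread_ge_four_by_four (A : Matrix (Fin 4) (Fin 4) ℝ)
    (hA : ∀ i j, 0 ≤ A i j) (hr : specRad A = 1) (h11 : A 0 0 = 0) :
    (1 : ℝ) / 3 ≤ spread A := by
  obtain ⟨ρ, hρ, hρ1⟩ := exists_mem_eigs_norm_eq_specRad A (by norm_num)
  rw [hr] at hρ1
  have hclose : ∀ μ ∈ eigs A, ‖μ - ρ‖ ≤ spread A := fun μ hμ => norm_sub_le_spread hμ hρ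
  have htrace := Multiset.norm_sum_sub_card_mul_le hρ hclose
  have hvar := Multiset.re_card_mul_sum_sq_sub_sq_sum_le hρ hclose
  rw [card_eigs, sum_eigs] at htrace
  rw [card_eigs, sum_eigs, sum_sq_eigs] at hvar
  have ht : 4 - 3 * spread A ≤ |A.trace| := by
    have := norm_le_norm_add_norm_sub' ((4 : ℂ) * ρ) (A.trace : ℂ)
    rw [norm_sub_rev] at this
    norm_num [hρ1] at this htrace
    linarith
  have hm : 4 * (A * A).trace - A.trace ^ 2 ≤ 21 * spread A ^ 2 := by exact_mod_cast hvar
  have htr : A.trace = A 1 1 + A 2 2 + A 3 3 := by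
    simp [trace, Fin.sum_univ_four, h11]
  have hdiag : A.trace ^ 2 ≤ 3 * (A * A).trace := by
    have h := sum_diag_sq_le_trace_mul_self hA
    rw [Fin.sum_univ_four, h11] at h
    rw [htr]
    nlinarith [sq_nonneg (A 1 1 - A 2 2), sq_nonneg (A 1 1 - A 3 3), sq_nonneg (A 2 2 - A 3 3)]
  have hs : 0 ≤ spread A := (norm_nonneg _).trans (hclose ρ hρ)
  nlinarith [sq_abs A.trace]
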